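/- If $f : S^1_r \to \mathbb{R}$ is any function (not necessarily continuous), then $\mathrm{dist}(f) \geq 2\pi r/3$. -/

import Mathlib

open scoped Real

/-- The intrinsic (arc-length) distance between two points of the circle of
radius `r` centered at the origin in the Euclidean plane. -/
noncomputable def geoDist15 (r : ℝ)
    (x y : Metric.sphere (0 : EuclideanSpace ℝ (Fin 2)) r) : ℝ :=
  r * Real.arccos ((inner ℝ (x : EuclideanSpace ℝ (Fin 2)) (y : EuclideanSpace ℝ (Fin 2)) : ℝ) / r ^ 2)

/-- The (additive) distortion of a function from the intrinsic circle to `ℝ`,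
as a value in `ℝ≥0∞`. -/
noncomputable def distortion15 (r : ℝ)
    (f : Metric.sphere (0 : EuclideanSpace ℝ (Fin 2)) r → ℝ) : ENNReal :=
  ⨆ p : Metric.sphere (0 : EuclideanSpace ℝ (Fin 2)) r ×
        Metric.sphere (0 : EuclideanSpace ℝ (Fin 2)) r,
    ENNReal.ofReal |dist (f p.1) (f p.2) - geoDist15 r p.1 p.2|

noncomputable def ptc (r θ : ℝ) : EuclideanSpace ℝ (Fin 2) :=
  (WithLp.equiv 2 (Fin 2 → ℝ)).symm ![r * Real.cos θ, r * Real.sin θ]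

lemma ptc_mem (r θ : ℝ) (hr : 0 < r) :
    ptc r θ ∈ Metric.sphere (0 : EuclideanSpace ℝ (Fin 2)) r := by
  rw [mem_sphere_zero_iff_norm, EuclideanSpace.norm_eq]
  simp only [ptc, WithLp.equiv_symm_apply, PiLp.toLp_apply, WithLp.ofLp_toLp, Fin.sum_univ_two,
    Matrix.cons_val_zero, Matrix.cons_val_one, Matrix.head_cons, Real.norm_eq_abs, sq_abs]
  rw [show (r * Real.cos θ)^2 + (r * Real.sin θ)^2 = r^2 by
    have := Real.sin_sq_add_cos_sq θ; nlinarith]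
  exact Real.sqrt_sq hr.le

lemma inner_ptc (r θ φ : ℝ) :
    (inner ℝ (ptc r θ) (ptc r φ) : ℝ) = r ^ 2 * Real.cos (θ - φ) := by
  simp only [ptc, PiLp.inner_apply, WithLp.equiv_symm_apply, PiLp.toLp_apply, WithLp.ofLp_toLp, RCLike.inner_apply,
    conj_trivial, Fin.sum_univ_two, Matrix.cons_val_zero, Matrix.cons_val_one, Matrix.head_cons]
  rw [Real.cos_sub]; ring

noncomputable def pt15 (r : ℝ) (hr : 0 < r) (θ : ℝ) :
    Metric.sphere (0 : EuclideanSpace ℝ (Fin 2)) r := ⟨ptc r θ, ptc_mem r θ hr⟩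

lemma pt15_add_two_pi (r : ℝ) (hr : 0 < r) (θ : ℝ) :
    pt15 r hr (θ + 2 * π) = pt15 r hr θ := by
  apply Subtype.ext
  show ptc r (θ + 2 * π) = ptc r θ
  unfold ptc
  rw [Real.cos_add_two_pi, Real.sin_add_two_pi]

lemma geo_pt (r : ℝ) (hr : 0 < r) (θ u : ℝ) (h0 : 0 ≤ u) (h1 : u ≤ π) :
    geoDist15 r (pt15 r hr θ) (pt15 r hr (θ + u)) = r * u := by
  show r * Real.arccos ((inner ℝ (ptc r θ) (ptc r (θ + u)) : ℝ) / r ^ 2) = r * u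
  rw [inner_ptc, show θ - (θ + u) = -u by ring, Real.cos_neg,
    mul_div_cancel_left₀ _ (pow_ne_zero 2 hr.ne'), Real.arccos_cos h0 h1]

lemma flip15 (P : ℕ → Prop) : ∀ n : ℕ, P 0 → ¬ P n → ∃ k, k < n ∧ P k ∧ ¬ P (k + 1) := by
  intro n
  induction n with
  | zero => intro h0 hn; exact absurd h0 hn
  | succ m ih =>
    intro h0 hn
    by_cases hm : P m
    · exact ⟨m, Nat.lt_succ_self m, hm, hn⟩
    · obtain ⟨k, hk, h1, h2⟩ := ih h0 hm
      exact ⟨k, Nat.lt_succ_of_lt hk, h1, h2⟩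

set_option maxHeartbeats 2000000 in
theorem stmt15 (r : ℝ) (hr : 0 < r)
    (f : Metric.sphere (0 : EuclideanSpace ℝ (Fin 2)) r → ℝ) :
    ENNReal.ofReal (2 * π * r / 3) ≤ distortion15 r f := by
  by_contra hcon
  have hlt : distortion15 r f < ENNReal.ofReal (2 * π * r / 3) := not_le.mp hcon
  have hne : distortion15 r f ≠ ⊤ := (hlt.trans_le le_top).ne
  set K := (distortion15 r f).toReal with hKdef
  have hK0 : 0 ≤ K := ENNReal.toReal_nonneg
  have hKlt : K < 2 * π * r / 3 := by
    have h := (ENNReal.toReal_lt_toReal hne ENNReal.ofReal_ne_top).mpr hlt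
    rwa [ENNReal.toReal_ofReal (by positivity)] at h
  -- pairwise bound
  have hpair : ∀ x y : Metric.sphere (0 : EuclideanSpace ℝ (Fin 2)) r,
      |dist (f x) (f y) - geoDist15 r x y| ≤ K := by
    intro x y
    have h1 : ENNReal.ofReal |dist (f x) (f y) - geoDist15 r x y| ≤ distortion15 r f :=
      le_iSup (fun p : Metric.sphere (0 : EuclideanSpace ℝ (Fin 2)) r ×
          Metric.sphere (0 : EuclideanSpace ℝ (Fin 2)) r =>
        ENNReal.ofReal |dist (f p.1) (f p.2) - geoDist15 r p.1 p.2|) (x, y)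
    have h2 := ENNReal.toReal_mono hne h1
    rwa [ENNReal.toReal_ofReal (abs_nonneg _)] at h2
  -- antipodal gap
  have hKpi : K < π * r := by
    have : (0:ℝ) < π * r := by positivity
    linarith
  have hg : ∀ θ : ℝ, r * π - K ≤ |f (pt15 r hr (θ + π)) - f (pt15 r hr θ)| := by
    intro θ
    have h := hpair (pt15 r hr θ) (pt15 r hr (θ + π))
    rw [geo_pt r hr θ π Real.pi_pos.le le_rfl, Real.dist_eq] at h
    have h1 := (abs_le.mp h).1
    rw [abs_sub_comm] at h1
    linarith
  -- choose a starting point where the antipodal difference is positive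
  obtain ⟨τ, hτ⟩ : ∃ τ : ℝ, 0 < f (pt15 r hr (τ + π)) - f (pt15 r hr τ) := by
    by_cases hc : 0 < f (pt15 r hr (0 + π)) - f (pt15 r hr 0)
    · exact ⟨0, hc⟩
    · refine ⟨π, ?_⟩
      have habs := hg 0
      have hneg : f (pt15 r hr (0 + π)) - f (pt15 r hr 0) ≤ 0 := not_lt.mp hc
      rw [abs_of_nonpos hneg] at habs
      have hper : pt15 r hr (π + π) = pt15 r hr 0 := by
        rw [show π + π = 0 + 2 * π by ring, pt15_add_two_pi]
      rw [hper]
      rw [show (0:ℝ) + π = π by ring] at habs hneg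
      linarith
  -- choose n and step s
  have hεpos : (0:ℝ) < 2 * π * r - 3 * K := by linarith
  obtain ⟨n, hn⟩ := exists_nat_gt (2 * π * r / (2 * π * r - 3 * K))
  have hnpos : (0:ℝ) < n := lt_trans (by positivity) hn
  have hn0 : (n:ℝ) ≠ 0 := hnpos.ne'
  set s := π / (n:ℝ) with hsdef
  have hs0 : 0 < s := div_pos Real.pi_pos hnpos
  have hsπ : s ≤ π := by
    rw [hsdef]
    apply div_le_self Real.pi_pos.le
    have : (1:ℕ) ≤ n := by
      by_contra h
      push_neg at h
      interval_cases n
      · simp at hnpos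
    exact_mod_cast this
  have hs2 : 2 * r * s < 2 * π * r - 3 * K := by
    have h1 : 2 * π * r < (n:ℝ) * (2 * π * r - 3 * K) := (div_lt_iff₀ hεpos).mp hn
    rw [hsdef, show 2 * r * (π / (n:ℝ)) = 2 * π * r / (n:ℝ) by ring, div_lt_iff₀ hnpos]
    nlinarith
  -- the walk
  set Q : ℕ → Prop := fun k => 0 < f (pt15 r hr (τ + (k:ℝ) * s + π)) - f (pt15 r hr (τ + (k:ℝ) * s))
    with hQdef
  have hQ0 : Q 0 := by
    show 0 < f (pt15 r hr (τ + ((0:ℕ):ℝ) * s + π)) - f (pt15 r hr (τ + ((0:ℕ):ℝ) * s))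
    rw [show τ + ((0:ℕ):ℝ) * s = τ by push_cast; ring]
    exact hτ
  have hQn : ¬ Q n := by
    show ¬ (0 < f (pt15 r hr (τ + (n:ℝ) * s + π)) - f (pt15 r hr (τ + (n:ℝ) * s)))
    have hns : τ + (n:ℝ) * s = τ + π := by
      rw [hsdef]; field_simp
    rw [hns]
    have hper : pt15 r hr (τ + π + π) = pt15 r hr τ := by
      rw [show τ + π + π = τ + 2 * π by ring, pt15_add_two_pi]
    rw [hper]
    intro h
    linarith
  obtain ⟨k, hkn, hQk, hQk1⟩ := flip15 Q n hQ0 hQn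
  set x := τ + (k:ℝ) * s with hxdef
  have hky : τ + ((k+1:ℕ):ℝ) * s = x + s := by push_cast; ring
  have hQk' : 0 < f (pt15 r hr (x + π)) - f (pt15 r hr x) := hQk
  have hQk1' : f (pt15 r hr (x + s + π)) - f (pt15 r hr (x + s)) ≤ 0 := by
    have := hQk1
    rw [hQdef] at this
    simp only [hky] at this
    exact not_lt.mp this
  -- the five constraints
  have h1 : r * π - K ≤ f (pt15 r hr (x + π)) - f (pt15 r hr x) := by
    have := hg x
    rwa [abs_of_pos hQk'] at this
  have h2 : r * π - K ≤ f (pt15 r hr (x + s)) - f (pt15 r hr (x + s + π)) := by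
    have := hg (x + s)
    rwa [abs_of_nonpos hQk1', neg_sub] at this
  have h3 : |f (pt15 r hr x) - f (pt15 r hr (x + s))| ≤ r * s + K := by
    have h := hpair (pt15 r hr x) (pt15 r hr (x + s))
    rw [geo_pt r hr x s hs0.le hsπ, Real.dist_eq] at h
    linarith [(abs_le.mp h).2]
  have h4 : |f (pt15 r hr (x + π)) - f (pt15 r hr (x + s + π))| ≤ r * s + K := by
    have h := hpair (pt15 r hr (x + π)) (pt15 r hr (x + π + s))
    rw [geo_pt r hr (x + π) s hs0.le hsπ, Real.dist_eq] at h
    have e : pt15 r hr (x + π + s) = pt15 r hr (x + s + π) := by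
      exact congrArg (pt15 r hr) (by ring)
    rw [e] at h
    linarith [(abs_le.mp h).2]
  have h5 : r * (π - s) - K ≤ |f (pt15 r hr (x + s)) - f (pt15 r hr (x + π))| := by
    have h := hpair (pt15 r hr (x + s)) (pt15 r hr (x + s + (π - s)))
    rw [geo_pt r hr (x + s) (π - s) (by linarith) (by linarith), Real.dist_eq] at h
    have e : pt15 r hr (x + s + (π - s)) = pt15 r hr (x + π) := by
      exact congrArg (pt15 r hr) (by ring)
    rw [e] at h
    linarith [(abs_le.mp h).1]
  -- final contradiction
  have h3' := abs_le.mp h3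
  have h4' := abs_le.mp h4
  rcases abs_cases (f (pt15 r hr (x + s)) - f (pt15 r hr (x + π))) with ⟨he, _⟩ | ⟨he, _⟩ <;>
    rw [he] at h5 <;> nlinarith [Real.pi_pos]
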